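/- arXiv:2402.02664 — 2 statements merged into one kernel-verified Lean document; each statement's English description precedes it below -/
import Mathlib

section
/- Let p ≥ 1 and k ≥ 1. Let X_{t−1}, …, X_{t−p} and X_{t−k} be square-integrable nonnegative integer-valued random variables. Suppose X_t = Σ_{j=1}^{p} Σ_{m=1}^{X_{t−j}} Y^{(j)}_m + ε_t, where for each j the (Y^{(j)}_m)_{m≥1} are iid square-integrable with mean α_j, ε_t is square-integrable, and the combined family ((Y^{(j)}_m)_{j,m}, ε_t) is independent of the random vector (X_{t−1}, …, X_{t−p}, X_{t−k}). Then Cov(X_t, X_{t−k}) = Σ_{j=1}^{p} α_j Cov(X_{t−j}, X_{t−k}). (Paper's Lemma 2, autocovariance recursion: γ_X(k) = Σ_{j=1}^{p} α_j γ_X(k−j) for k ≠ 0.) -/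
/-!
Let `V = (X_{t-1}, …, X_{t-p}, X_{t-k})` and let `W` be a nonnegative function of `V`. Each
summand `Y^{(j)}_m 1{m ≤ X_{t-j}} W` is a product of independent factors, so summing over `m`
(a Wald identity) gives `E[(α_j ⊙ X_{t-j}) W] = α_j E[X_{t-j} W]`, and therefore
`E[X_t W] = Σ_j α_j E[X_{t-j} W] + E[ε_t] E[W]`.
With `W = X_{t-k}` and `W = 1` the covariance recursion follows by subtraction.
The identity is first proved for lower Lebesgue integrals, where the integrability of
`X_t X_{t-k}` is not needed in advance, and then transferred to Bochner integrals.
-/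

open MeasureTheory ProbabilityTheory
open scoped ENNReal

section

variable {Ω : Type*}

/-- The generalized thinning `α ⊙ N = Σ_{m=1}^{N} Y_m`. -/
def thinning {M : Type*} [AddCommMonoid M] (Y : ℕ → Ω → M) (N : Ω → ℕ) (ω : Ω) : M :=
  ∑ m ∈ Finset.Icc 1 (N ω), Y m ω

theorem Nat.cast_thinning {R : Type*} [AddCommMonoidWithOne R] (Y : ℕ → Ω → ℕ) (N : Ω → ℕ)
    (ω : Ω) : ((thinning Y N ω : ℕ) : R) = thinning (fun m ω => (Y m ω : R)) N ω :=
  Nat.cast_sum _ _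

variable [MeasurableSpace Ω] {μ : Measure Ω}

theorem Measurable.thinning {M : Type*} [AddCommMonoid M] [MeasurableSpace M]
    [MeasurableAdd₂ M] {Y : ℕ → Ω → M} {N : Ω → ℕ} (hY : ∀ m, Measurable (Y m))
    (hN : Measurable N) : Measurable (thinning Y N) :=
  (measurable_from_prod_countable_right (f := fun q : ℕ × Ω => ∑ m ∈ Finset.Icc 1 q.1, Y m q.2)
    fun n => Finset.measurable_sum (Finset.Icc 1 n) fun m _ => hY m).comp
      (hN.prodMk measurable_id)

theorem lintegral_thinning_mul_of_indepFun {Y : ℕ → Ω → ℝ≥0∞} {N : Ω → ℕ} {W : Ω → ℝ≥0∞}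
    {a : ℝ≥0∞} (hY : ∀ m, Measurable (Y m)) (hN : Measurable N) (hW : Measurable W)
    (hind : ∀ m, IndepFun (Y m) (fun ω => (N ω, W ω)) μ) (hmean : ∀ m, ∫⁻ ω, Y m ω ∂μ = a) :
    ∫⁻ ω, thinning Y N ω * W ω ∂μ = a * ∫⁻ ω, N ω * W ω ∂μ := by
  classical
  -- `G m = 1{1 ≤ m ≤ N} W` is a function of `(N, W)`, hence independent of `Y m`.
  let g (m : ℕ) (q : ℕ × ℝ≥0∞) : ℝ≥0∞ := if m ∈ Finset.Icc 1 q.1 then q.2 else 0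
  have hg (m : ℕ) : Measurable (g m) :=
    Measurable.ite (measurable_fst (.of_discrete (s := {n : ℕ | m ∈ Finset.Icc 1 n})))
      measurable_snd measurable_const
  let G (m : ℕ) (ω : Ω) : ℝ≥0∞ := g m (N ω, W ω)
  have hG (m : ℕ) : Measurable (G m) := (hg m).comp (hN.prodMk hW)
  have hG_tsum (ω : Ω) : ∑' m, G m ω = N ω * W ω := by
    rw [tsum_eq_sum (s := Finset.Icc 1 (N ω)) fun m hm => if_neg hm,
      Finset.sum_congr rfl fun m hm => if_pos hm]
    simp
  have hYG_tsum (ω : Ω) : thinning Y N ω * W ω = ∑' m, Y m ω * G m ω := by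
    rw [tsum_eq_sum (s := Finset.Icc 1 (N ω)) fun m hm => by
        simp only [G, g, if_neg hm, mul_zero], thinning, Finset.sum_mul]
    exact Finset.sum_congr rfl fun m hm => by simp only [G, g, if_pos hm]
  calc ∫⁻ ω, thinning Y N ω * W ω ∂μ
      = ∑' m, ∫⁻ ω, Y m ω * G m ω ∂μ := by
        simp_rw [hYG_tsum]
        exact lintegral_tsum fun m => ((hY m).mul (hG m)).aemeasurable
    _ = ∑' m, a * ∫⁻ ω, G m ω ∂μ := by
        congr 1; funext m
        rw [← hmean m]
        exact lintegral_mul_eq_lintegral_mul_lintegral_of_indepFun (hY m) (hG m)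
          ((hind m).comp measurable_id (hg m))
    _ = a * ∫⁻ ω, N ω * W ω ∂μ := by
        rw [ENNReal.tsum_mul_left, ← lintegral_tsum fun m => (hG m).aemeasurable]
        simp_rw [hG_tsum]

theorem lintegral_ginar_mul {ι : Type*} [Fintype ι] {X : ι → Ω → ℕ} {Y : ι → ℕ → Ω → ℕ}
    {ε W : Ω → ℕ} {a : ι → ℝ≥0∞} (hX : ∀ j, Measurable (X j)) (hY : ∀ j m, Measurable (Y j m))
    (hε : Measurable ε) (hW : Measurable W)
    (hind : IndepFun (fun ω => ((fun jm : ι × ℕ => Y jm.1 jm.2 ω), ε ω))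
      (fun ω => ((fun j => X j ω), W ω)) μ)
    (hmean : ∀ j m, ∫⁻ ω, (Y j m ω : ℝ≥0∞) ∂μ = a j) :
    ∫⁻ ω, ((∑ j, thinning (Y j) (X j) ω + ε ω : ℕ) : ℝ≥0∞) * W ω ∂μ
      = ∑ j, a j * ∫⁻ ω, (X j ω : ℝ≥0∞) * W ω ∂μ
        + (∫⁻ ω, (ε ω : ℝ≥0∞) ∂μ) * ∫⁻ ω, (W ω : ℝ≥0∞) ∂μ := by
  have hcast : Measurable (fun n : ℕ => (n : ℝ≥0∞)) := measurable_from_nat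
  have hYc (j : ι) (m : ℕ) : Measurable fun ω => (Y j m ω : ℝ≥0∞) := hcast.comp (hY j m)
  have hεc : Measurable fun ω => (ε ω : ℝ≥0∞) := hcast.comp hε
  have hWc : Measurable fun ω => (W ω : ℝ≥0∞) := hcast.comp hW
  have hSW (j : ι) :
      Measurable fun ω => thinning (fun m ω => (Y j m ω : ℝ≥0∞)) (X j) ω * W ω :=
    (Measurable.thinning (hYc j) (hX j)).mul hWc
  have hεW : Measurable fun ω => (ε ω : ℝ≥0∞) * W ω := hεc.mul hWc
  simp only [Nat.cast_add, Nat.cast_sum, Nat.cast_thinning, add_mul, Finset.sum_mul]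
  rw [lintegral_add_right _ hεW, lintegral_finsetSum _ fun j _ => hSW j]
  congr 1
  · refine Finset.sum_congr rfl fun j _ =>
      lintegral_thinning_mul_of_indepFun (hYc j) (hX j) hWc (fun m => ?_) (hmean j)
    exact hind.comp (φ := fun q => (q.1 (j, m) : ℝ≥0∞)) (ψ := fun q => (q.1 j, (q.2 : ℝ≥0∞)))
      (by fun_prop) (by fun_prop)
  · exact lintegral_mul_eq_lintegral_mul_lintegral_of_indepFun hεc hWc
      (hind.comp (φ := fun q : (ι × ℕ → ℕ) × ℕ => (q.2 : ℝ≥0∞))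
        (ψ := fun q : (ι → ℕ) × ℕ => (q.2 : ℝ≥0∞)) (by fun_prop) (by fun_prop))

theorem integral_natCast_eq_toReal_lintegral {f : Ω → ℕ} (hf : Measurable f) :
    ∫ ω, (f ω : ℝ) ∂μ = (∫⁻ ω, (f ω : ℝ≥0∞) ∂μ).toReal := by
  rw [integral_eq_lintegral_of_nonneg_ae (ae_of_all _ fun ω => Nat.cast_nonneg _)
    (measurable_from_nat.comp hf).aestronglyMeasurable]
  simp only [ENNReal.ofReal_natCast]

theorem lintegral_natCast_ne_top {f : Ω → ℕ} (hf : Integrable (fun ω => (f ω : ℝ)) μ) :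
    ∫⁻ ω, (f ω : ℝ≥0∞) ∂μ ≠ ∞ := by
  simpa only [Real.enorm_natCast] using hf.hasFiniteIntegral.ne

theorem integral_ginar_mul {ι : Type*} [Fintype ι] {X : ι → Ω → ℕ} {Y : ι → ℕ → Ω → ℕ}
    {ε W : Ω → ℕ} {α : ι → ℝ} (hX : ∀ j, Measurable (X j)) (hY : ∀ j m, Measurable (Y j m))
    (hε : Measurable ε) (hW : Measurable W)
    (hY1 : ∀ j m, Integrable (fun ω => (Y j m ω : ℝ)) μ)
    (hXW1 : ∀ j, Integrable (fun ω => (X j ω : ℝ) * W ω) μ)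
    (hε1 : Integrable (fun ω => (ε ω : ℝ)) μ) (hW1 : Integrable (fun ω => (W ω : ℝ)) μ)
    (hind : IndepFun (fun ω => ((fun jm : ι × ℕ => Y jm.1 jm.2 ω), ε ω))
      (fun ω => ((fun j => X j ω), W ω)) μ)
    (hmean : ∀ j m, ∫ ω, (Y j m ω : ℝ) ∂μ = α j) :
    ∫ ω, ((∑ j, thinning (Y j) (X j) ω + ε ω : ℕ) : ℝ) * W ω ∂μ
      = ∑ j, α j * ∫ ω, (X j ω : ℝ) * W ω ∂μ
        + (∫ ω, (ε ω : ℝ) ∂μ) * ∫ ω, (W ω : ℝ) ∂μ := by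
  have hα (j : ι) : 0 ≤ α j := hmean j 0 ▸ integral_nonneg fun ω => Nat.cast_nonneg _
  have hmean' (j : ι) (m : ℕ) : ∫⁻ ω, (Y j m ω : ℝ≥0∞) ∂μ = ENNReal.ofReal (α j) := by
    rw [← hmean j m, integral_natCast_eq_toReal_lintegral (hY j m),
      ENNReal.ofReal_toReal (lintegral_natCast_ne_top (hY1 j m))]
  have hXW_top (j : ι) : ∫⁻ ω, ((X j ω * W ω : ℕ) : ℝ≥0∞) ∂μ ≠ ∞ :=
    lintegral_natCast_ne_top (by exact_mod_cast hXW1 j)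
  have hS : Measurable fun ω => (∑ j, thinning (Y j) (X j) ω + ε ω) * W ω :=
    ((Finset.measurable_sum _ fun j _ => Measurable.thinning (hY j) (hX j)).add hε).mul hW
  have key := lintegral_ginar_mul hX hY hε hW hind hmean'
  simp only [← Nat.cast_mul] at key ⊢
  rw [integral_natCast_eq_toReal_lintegral hS, key,
    ENNReal.toReal_add
      (ENNReal.sum_ne_top.2 fun j _ => ENNReal.mul_ne_top ENNReal.ofReal_ne_top (hXW_top j))
      (ENNReal.mul_ne_top (lintegral_natCast_ne_top hε1) (lintegral_natCast_ne_top hW1)),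
    ENNReal.toReal_sum fun j _ => ENNReal.mul_ne_top ENNReal.ofReal_ne_top (hXW_top j),
    integral_natCast_eq_toReal_lintegral hε, integral_natCast_eq_toReal_lintegral hW,
    ENNReal.toReal_mul]
  refine congrArg₂ (· + ·) (Finset.sum_congr rfl fun j _ => ?_) rfl
  rw [ENNReal.toReal_mul, ENNReal.toReal_ofReal (hα j),
    integral_natCast_eq_toReal_lintegral (f := fun ω => X j ω * W ω) ((hX j).mul hW)]

end

theorem ginar_autocovariance_recursion_general {Ω : Type*} [MeasurableSpace Ω]
    (μ : Measure Ω) [IsProbabilityMeasure μ]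
    (p : ℕ)
    (Xt : Ω → ℕ) (X : Fin p → Ω → ℕ) (Xk : Ω → ℕ)
    (Y : Fin p → ℕ → Ω → ℕ) (ε : Ω → ℕ) (α : Fin p → ℝ)
    (hXmeas : ∀ j, Measurable (X j)) (hXkmeas : Measurable Xk)
    (hYmeas : ∀ j m, Measurable (Y j m)) (hεmeas : Measurable ε)
    (hX2 : ∀ j, MemLp (fun ω => (X j ω : ℝ)) 2 μ)
    (hXk2 : MemLp (fun ω => (Xk ω : ℝ)) 2 μ)
    (hY2 : ∀ j m, MemLp (fun ω => (Y j m ω : ℝ)) 2 μ)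
    (hε2 : MemLp (fun ω => (ε ω : ℝ)) 2 μ)
    (hstruct : ∀ ω, Xt ω = (∑ j, ∑ m ∈ Finset.Icc 1 (X j ω), Y j m ω) + ε ω)
    (hYmean : ∀ j m, ∫ ω, (Y j m ω : ℝ) ∂μ = α j)
    (hindep : IndepFun
      (fun ω => ((fun jm : Fin p × ℕ => Y jm.1 jm.2 ω), ε ω))
      (fun ω => ((fun j => X j ω), Xk ω)) μ) :
    (∫ ω, (Xt ω : ℝ) * (Xk ω : ℝ) ∂μ)
        - (∫ ω, (Xt ω : ℝ) ∂μ) * (∫ ω, (Xk ω : ℝ) ∂μ)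
      = ∑ j, α j * ((∫ ω, (X j ω : ℝ) * (Xk ω : ℝ) ∂μ)
          - (∫ ω, (X j ω : ℝ) ∂μ) * (∫ ω, (Xk ω : ℝ) ∂μ)) := by
  obtain rfl : Xt = fun ω => ∑ j, thinning (Y j) (X j) ω + ε ω := funext hstruct
  have hY1 (j : Fin p) (m : ℕ) := (hY2 j m).integrable one_le_two
  have hε1 := hε2.integrable one_le_two
  have h_lag := integral_ginar_mul hXmeas hYmeas hεmeas hXkmeas hY1
    (fun j => (hX2 j).integrable_mul hXk2) hε1 (hXk2.integrable one_le_two) hindep hYmean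
  have h_mean := integral_ginar_mul (W := fun _ => 1) hXmeas hYmeas hεmeas measurable_const hY1
    (fun j => by simpa using (hX2 j).integrable one_le_two) hε1 (integrable_const _)
    (hindep.comp (ψ := fun q : (Fin p → ℕ) × ℕ => (q.1, 1)) measurable_id (by fun_prop))
    hYmean
  simp only [Nat.cast_one, mul_one, integral_const, probReal_univ, one_smul] at h_mean
  rw [h_lag, h_mean, add_mul, Finset.sum_mul]
  simp only [mul_sub, Finset.sum_sub_distrib, mul_assoc]
  ring

/-- Paper's Lemma 2, autocovariance recursion of a GINAR(p) process:
`Cov(X_t, X_{t−k}) = Σ_{j=1}^{p} α_j Cov(X_{t−j}, X_{t−k})`, i.e.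
`γ_X(k) = Σ_{j=1}^{p} α_j γ_X(k−j)` for lags `k ≠ 0`.  Here `X j` denotes the lagged
value `X_{t−(j+1)}`, `Xk` denotes `X_{t−k}`, the structural equation
`X_t = Σ_j Σ_{m=1}^{X_{t−j}} Y^{(j)}_m + ε_t` holds, the `(Y j m)_m` are iid with
mean `α j`, and the combined family `((Y j m)_{j,m}, ε)` is independent of the vector
`(X_{t−1}, …, X_{t−p}, X_{t−k})`.  Covariances are written as
`Cov(U, V) = E[UV] − E[U]E[V]`. -/
theorem ginar_autocovariance_recursion {Ω : Type*} [MeasurableSpace Ω]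
    (μ : Measure Ω) [IsProbabilityMeasure μ]
    (p : ℕ) (hp : 1 ≤ p) (k : ℕ) (hk : 1 ≤ k)
    (Xt : Ω → ℕ) (X : Fin p → Ω → ℕ) (Xk : Ω → ℕ)
    (Y : Fin p → ℕ → Ω → ℕ) (ε : Ω → ℕ) (α : Fin p → ℝ)
    (hXtmeas : Measurable Xt) (hXmeas : ∀ j, Measurable (X j)) (hXkmeas : Measurable Xk)
    (hYmeas : ∀ j m, Measurable (Y j m)) (hεmeas : Measurable ε)
    (hX2 : ∀ j, MemLp (fun ω => (X j ω : ℝ)) 2 μ)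
    (hXk2 : MemLp (fun ω => (Xk ω : ℝ)) 2 μ)
    (hY2 : ∀ j m, MemLp (fun ω => (Y j m ω : ℝ)) 2 μ)
    (hε2 : MemLp (fun ω => (ε ω : ℝ)) 2 μ)
    (hstruct : ∀ ω, Xt ω = (∑ j, ∑ m ∈ Finset.Icc 1 (X j ω), Y j m ω) + ε ω)
    (hYiid : ∀ j, iIndepFun (Y j) μ)
    (hYident : ∀ j m, IdentDistrib (Y j m) (Y j 0) μ μ)
    (hYmean : ∀ j m, ∫ ω, (Y j m ω : ℝ) ∂μ = α j)
    (hindep : IndepFun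
      (fun ω => ((fun jm : Fin p × ℕ => Y jm.1 jm.2 ω), ε ω))
      (fun ω => ((fun j => X j ω), Xk ω)) μ) :
    (∫ ω, (Xt ω : ℝ) * (Xk ω : ℝ) ∂μ)
        - (∫ ω, (Xt ω : ℝ) ∂μ) * (∫ ω, (Xk ω : ℝ) ∂μ)
      = ∑ j, α j * ((∫ ω, (X j ω : ℝ) * (Xk ω : ℝ) ∂μ)
          - (∫ ω, (X j ω : ℝ) ∂μ) * (∫ ω, (Xk ω : ℝ) ∂μ)) :=
  ginar_autocovariance_recursion_general μ p Xt X Xk Y ε α hXmeas hXkmeas hYmeas hεmeas hX2 hXk2 hY2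
    hε2 hstruct hYmean hindep
end

section
/- Let p ≥ 1 and let (X_s)_s be square-integrable nonnegative integer-valued random variables that are second-order stationary: E[X_s] = μ_X for all s and Cov(X_s, X_{s+h}) = γ(|h|) depends only on the lag |h|. Suppose at time t the structural equation X_t = Σ_{j=1}^{p} Σ_{m=1}^{X_{t−j}} Y^{(j)}_m + ε_t holds, where for each j the (Y^{(j)}_m)_{m≥1} are iid square-integrable with mean α_j and variance β_j, ε_t is square-integrable with variance σ²_ε, the families (Y^{(1)}_m)_m, …, (Y^{(p)}_m)_m, ε_t are mutually independent, and the combined family is independent of (X_{t−1}, …, X_{t−p}), and suppose the autocovariance recursion γ(k) = Σ_{j=1}^{p} α_j γ(|k−j|) holds for k = 1, …, p. Then the variance of the process satisfies γ(0) = Σ_{j=1}^{p} α_j γ(j) + Σ_{j=1}^{p} β_j μ_X + σ²_ε; equivalently, if Σ_{j=1}^{p} α_j ρ(j) < 1 with ρ(j) = γ(j)/γ(0), then γ(0) = (Σ_{j=1}^{p} β_j μ_X + σ²_ε)/(1 − Σ_{j=1}^{p} α_j ρ(j)). (Paper's Lemma 2, marginal variance of a GINAR(p) process.) -/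
/-!
Conditionally on the lagged values `(X (t-1), …, X (t-p)) = n`, which are independent of the
counting variables and of the innovation, `X t` is a sum of independent variables with mean
`∑ α_j n_j + E ε` and variance `∑ β_j n_j + σ²_ε`. The law of total variance therefore gives
`γ 0 = ∑ β_j μ_X + σ²_ε + Var (∑ α_j X (t-j))`, and the Yule–Walker equations turn
`Var (∑ α_j X (t-j)) = ∑_{j,k} α_j α_k γ |j-k|` into `∑ α_j γ j`. The second form is obtained by
solving for `γ 0`; if `γ 0 = 0` then every `γ j` vanishes, so the junk value `γ j / 0 = 0` is harmless.
-/

open MeasureTheory ProbabilityTheory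

namespace ProbabilityTheory

section Moments

variable {Ω : Type*} [MeasurableSpace Ω] {μ : Measure Ω}

lemma integral_fun_sum_mul_add_const [IsProbabilityMeasure μ] {ι : Type*} [Fintype ι]
    {Z : ι → Ω → ℝ} (hZ : ∀ i, Integrable (Z i) μ) (a : ι → ℝ) (c : ℝ) :
    ∫ ω, (∑ i, a i * Z i ω + c) ∂μ = ∑ i, a i * ∫ ω, Z i ω ∂μ + c := by
  rw [integral_add (integrable_finsetSum _ fun i _ => (hZ i).const_mul (a i)) (integrable_const c),
    integral_finsetSum _ fun i _ => (hZ i).const_mul (a i)]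
  simp [integral_const_mul]

lemma variance_fun_sum_mul_add_const [IsProbabilityMeasure μ] {ι : Type*} [Fintype ι]
    {Z : ι → Ω → ℝ} (hZ : ∀ i, MemLp (Z i) 2 μ) (a : ι → ℝ) (c : ℝ) :
    Var[fun ω => ∑ i, a i * Z i ω + c; μ] = ∑ i, ∑ j, a i * a j * cov[Z i, Z j; μ] := by
  have haZ : ∀ i, MemLp (fun ω => a i * Z i ω) 2 μ := fun i => (hZ i).const_mul (a i)
  have hsum : MemLp (fun ω => ∑ i, a i * Z i ω) 2 μ := memLp_finsetSum _ fun i _ => haZ i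
  rw [variance_add_const hsum.aestronglyMeasurable, ← covariance_self hsum.aemeasurable,
    covariance_fun_sum_fun_sum haZ haZ]
  simp_rw [covariance_const_mul_left, covariance_const_mul_right, mul_assoc]

lemma covariance_eq_zero_of_variance_eq_zero [IsFiniteMeasure μ] {X : Ω → ℝ} (hX : MemLp X 2 μ)
    (h : Var[X; μ] = 0) (Y : Ω → ℝ) : cov[X, Y; μ] = 0 :=
  integral_eq_zero_of_ae <| by
    filter_upwards [ae_eq_integral_of_variance_eq_zero hX h] with ω hω
    simp [hω]

end Moments

section IndepConditioning

variable {Ω S T : Type*} [MeasurableSpace Ω] [MeasurableSpace S] [MeasurableSpace T]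
  {μ : Measure Ω} [IsProbabilityMeasure μ] {U : Ω → S} {V : Ω → T}

lemma IndepFun.integral_comp_eq_integral_integral (hUV : IndepFun U V μ) (hU : Measurable U)
    (hV : Measurable V) {g : S × T → ℝ} (hg : Measurable g)
    (hint : Integrable (fun ω => g (U ω, V ω)) μ) :
    ∫ ω, g (U ω, V ω) ∂μ = ∫ ω, ∫ ω', g (U ω', V ω) ∂μ ∂μ := by
  have hmap : μ.map (fun ω => (U ω, V ω)) = (μ.map U).prod (μ.map V) :=
    (indepFun_iff_map_prod_eq_prod_map_map hU.aemeasurable hV.aemeasurable).mp hUV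
  have hgint : Integrable g ((μ.map U).prod (μ.map V)) := by
    rw [← hmap]
    exact (integrable_map_measure hg.aestronglyMeasurable (hU.prodMk hV).aemeasurable).mpr hint
  have hslice : ∀ v, ∫ u, g (u, v) ∂(μ.map U) = ∫ ω', g (U ω', v) ∂μ := fun v =>
    integral_map hU.aemeasurable (hg.comp (measurable_id.prodMk measurable_const)).aestronglyMeasurable
  calc ∫ ω, g (U ω, V ω) ∂μ = ∫ z, g z ∂((μ.map U).prod (μ.map V)) := by
        rw [← hmap, integral_map (hU.prodMk hV).aemeasurable hg.aestronglyMeasurable]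
    _ = ∫ v, ∫ u, g (u, v) ∂(μ.map U) ∂(μ.map V) := integral_prod_symm g hgint
    _ = ∫ ω, ∫ u, g (u, V ω) ∂(μ.map U) ∂μ :=
        integral_map hV.aemeasurable hg.stronglyMeasurable.integral_prod_left'.aestronglyMeasurable
    _ = ∫ ω, ∫ ω', g (U ω', V ω) ∂μ ∂μ := by simp only [hslice]

/-- Law of total variance, when `V` is independent of the remaining randomness `U`. -/
lemma IndepFun.variance_comp_eq_integral_add_variance (hUV : IndepFun U V μ) (hU : Measurable U)
    (hV : Measurable V) {g : S × T → ℝ} (hg : Measurable g)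
    (hg2 : MemLp (fun ω => g (U ω, V ω)) 2 μ) (hslice2 : ∀ v, MemLp (fun ω => g (U ω, v)) 2 μ)
    {m s : T → ℝ} (hm : ∀ v, ∫ ω, g (U ω, v) ∂μ = m v)
    (hs : ∀ v, Var[fun ω => g (U ω, v); μ] = s v)
    (hm2 : MemLp (fun ω => m (V ω)) 2 μ) (hsint : Integrable (fun ω => s (V ω)) μ) :
    Var[fun ω => g (U ω, V ω); μ] = ∫ ω, s (V ω) ∂μ + Var[fun ω => m (V ω); μ] := by
  have hmean : ∫ ω, g (U ω, V ω) ∂μ = ∫ ω, m (V ω) ∂μ := by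
    rw [hUV.integral_comp_eq_integral_integral hU hV hg (hg2.integrable one_le_two)]
    simp only [hm]
  have hsq : ∫ ω, g (U ω, V ω) ^ 2 ∂μ = ∫ ω, (s (V ω) + m (V ω) ^ 2) ∂μ := by
    rw [hUV.integral_comp_eq_integral_integral (g := fun z => g z ^ 2) hU hV (hg.pow_const 2)
      hg2.integrable_sq]
    refine integral_congr_ae (.of_forall fun ω => ?_)
    have := variance_eq_sub (hslice2 (V ω))
    simp only [hs, hm, Pi.pow_apply] at this
    simp only
    linarith
  rw [variance_eq_sub hg2, variance_eq_sub hm2]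
  simp only [Pi.pow_apply]
  rw [hsq, hmean, integral_add hsint hm2.integrable_sq]
  ring

end IndepConditioning

lemma pairwise_indepFun_optionElim {Ω ι κ β : Type*} [MeasurableSpace Ω] {μ : Measure Ω}
    [MeasurableSpace β] {Y : ι → κ → Ω → β} {ε : Ω → β} (hY : ∀ i, iIndepFun (Y i) μ)
    (hmut : iIndep (fun i : Option ι => i.elim (MeasurableSpace.comap ε inferInstance)
      fun i => MeasurableSpace.comap (fun ω m => Y i m ω) MeasurableSpace.pi) μ) :
    Pairwise fun q q' : Option ((_ : ι) × κ) =>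
      IndepFun (q.elim ε fun q => Y q.1 q.2) (q'.elim ε fun q => Y q.1 q.2) μ := by
  have hle : ∀ i m, MeasurableSpace.comap (Y i m) inferInstance ≤
      MeasurableSpace.comap (fun ω m => Y i m ω) MeasurableSpace.pi := fun i m =>
    (MeasurableSpace.comap_comp (f := fun y : κ → β => y m) (g := fun ω m => Y i m ω)).symm.trans_le
      (MeasurableSpace.comap_mono (measurable_pi_apply m).comap_le)
  rintro (_ | ⟨i, m⟩) (_ | ⟨i', m'⟩) hne
  · exact absurd rfl hne
  · exact indep_of_indep_of_le_right (hmut.indep (i := none) (j := some i') (by simp))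
      (hle i' m')
  · exact indep_of_indep_of_le_left (hmut.indep (i := some i) (j := none) (by simp)) (hle i m)
  · by_cases hi : i = i'
    · subst hi
      exact (hY i).indepFun fun h => hne (by simp_all)
    · exact indep_of_indep_of_le_right (indep_of_indep_of_le_left
        (hmut.indep (i := some i) (j := some i') (by simpa using hi)) (hle i m)) (hle i' m')

end ProbabilityTheory

section ThinningSum

variable {Ω : Type*} [MeasurableSpace Ω] {μ : Measure Ω} {ι : Type*} [Fintype ι]

/-- The right-hand side of the GINAR equation with the lagged values frozen at `n`. -/
def thinningSum (y : ι → ℕ → ℕ) (e : ℕ) (n : ι → ℕ) : ℝ :=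
  ∑ i, ∑ m ∈ Finset.Icc 1 (n i), (y i m : ℝ) + e

lemma measurable_thinningSum :
    Measurable fun z : ((ι → ℕ → ℕ) × ℕ) × (ι → ℕ) => thinningSum z.1.1 z.1.2 z.2 :=
  measurable_from_prod_countable_left fun n => by
    simp only [thinningSum]
    refine .add (Finset.measurable_fun_sum _ fun i _ => Finset.measurable_fun_sum _ fun m _ => ?_) ?_
    · exact measurable_from_top.comp ((measurable_pi_apply m).comp
        ((measurable_pi_apply i).comp measurable_fst))
    · exact measurable_from_top.comp measurable_snd

variable {Y : ι → ℕ → Ω → ℕ} {ε : Ω → ℕ}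

lemma integral_thinningSum (hY : ∀ i m, Integrable (fun ω => (Y i m ω : ℝ)) μ)
    (hε : Integrable (fun ω => (ε ω : ℝ)) μ) {α : ι → ℝ}
    (hYmean : ∀ i m, ∫ ω, (Y i m ω : ℝ) ∂μ = α i) (n : ι → ℕ) :
    ∫ ω, thinningSum (fun i m => Y i m ω) (ε ω) n ∂μ = ∑ i, α i * n i + ∫ ω, (ε ω : ℝ) ∂μ := by
  unfold thinningSum
  rw [integral_add (integrable_finsetSum _ fun i _ => integrable_finsetSum _ fun m _ => hY i m) hε,
    integral_finsetSum _ fun i _ => integrable_finsetSum _ fun m _ => hY i m]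
  simp_rw [integral_finsetSum _ fun m _ => hY _ m, hYmean, Finset.sum_const, Nat.card_Icc,
    add_tsub_cancel_right, nsmul_eq_mul, mul_comm]

lemma variance_thinningSum (hY : ∀ i m, MemLp (fun ω => (Y i m ω : ℝ)) 2 μ)
    (hε : MemLp (fun ω => (ε ω : ℝ)) 2 μ) (hYiid : ∀ i, iIndepFun (Y i) μ)
    (hmut : iIndep (fun i : Option ι => i.elim (MeasurableSpace.comap ε inferInstance)
      fun i => MeasurableSpace.comap (fun ω m => Y i m ω) MeasurableSpace.pi) μ)
    {β : ι → ℝ} (hYvar : ∀ i m, Var[fun ω => (Y i m ω : ℝ); μ] = β i) (n : ι → ℕ) :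
    Var[fun ω => thinningSum (fun i m => Y i m ω) (ε ω) n; μ]
      = ∑ i, β i * n i + Var[fun ω => (ε ω : ℝ); μ] := by
  classical
  set W : Option ((_ : ι) × ℕ) → Ω → ℝ := fun q ω => ((q.elim ε fun q => Y q.1 q.2) ω : ℝ)
  set s := (Finset.univ.sigma fun i => Finset.Icc 1 (n i)).insertNone
  have hsum : (fun ω => thinningSum (fun i m => Y i m ω) (ε ω) n) = ∑ q ∈ s, W q := by
    ext ω
    simp [s, W, thinningSum, Finset.sum_insertNone, Finset.sum_sigma, add_comm]
  have hW : ∀ q ∈ s, MemLp (W q) 2 μ := by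
    rintro (_ | q) _
    exacts [hε, hY q.1 q.2]
  have hindep : Set.Pairwise s fun q q' => IndepFun (W q) (W q') μ := fun q _ q' _ hne =>
    (pairwise_indepFun_optionElim hYiid hmut hne).comp measurable_from_top measurable_from_top
  rw [hsum, IndepFun.variance_sum hW hindep, Finset.sum_insertNone, Finset.sum_sigma]
  simp [W, hYvar, add_comm, mul_comm]

lemma memLp_thinningSum (hY : ∀ i m, MemLp (fun ω => (Y i m ω : ℝ)) 2 μ)
    (hε : MemLp (fun ω => (ε ω : ℝ)) 2 μ) (n : ι → ℕ) :
    MemLp (fun ω => thinningSum (fun i m => Y i m ω) (ε ω) n) 2 μ :=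
  (memLp_finsetSum _ fun i _ => memLp_finsetSum _ fun m _ => hY i m).add hε

end ThinningSum

lemma sum_sum_mul_natAbs_sub_eq_of_yuleWalker {p : ℕ} {α : Fin p → ℝ} {γ : ℕ → ℝ}
    (hrec : ∀ k : ℕ, 1 ≤ k → k ≤ p →
      γ k = ∑ j : Fin p, α j * γ ((k : ℤ) - ((j : ℕ) + 1)).natAbs) :
    ∑ j : Fin p, ∑ k : Fin p, α j * α k * γ ((j : ℤ) - (k : ℤ)).natAbs
      = ∑ j : Fin p, α j * γ ((j : ℕ) + 1) := by
  refine Finset.sum_congr rfl fun j _ => ?_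
  rw [hrec _ (Nat.le_add_left 1 _) j.isLt, Finset.mul_sum]
  refine Finset.sum_congr rfl fun k _ => ?_
  rw [mul_assoc, Nat.cast_add, Nat.cast_one, add_sub_add_right_eq_sub]

lemma variance_sum_lag_mul_add_const_of_yuleWalker {Ω : Type*} [MeasurableSpace Ω]
    {μ : Measure Ω} [IsProbabilityMeasure μ] {X : ℤ → Ω → ℝ} (hX : ∀ s, MemLp (X s) 2 μ)
    {γ : ℕ → ℝ} (hcov : ∀ s h : ℤ, cov[X s, X (s + h); μ] = γ h.natAbs) {p : ℕ}
    {α : Fin p → ℝ} (hrec : ∀ k : ℕ, 1 ≤ k → k ≤ p →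
      γ k = ∑ j : Fin p, α j * γ ((k : ℤ) - ((j : ℕ) + 1)).natAbs) (t : ℤ) (c : ℝ) :
    Var[fun ω => ∑ j : Fin p, α j * X (t - ((j : ℕ) + 1)) ω + c; μ]
      = ∑ j : Fin p, α j * γ ((j : ℕ) + 1) := by
  have hlag : ∀ j k : Fin p, cov[X (t - ((j : ℕ) + 1)), X (t - ((k : ℕ) + 1)); μ]
      = γ ((j : ℤ) - (k : ℤ)).natAbs := fun j k => by
    rw [← hcov (t - ((j : ℕ) + 1)) ((j : ℤ) - k)]
    congr 2
    ring
  rw [variance_fun_sum_mul_add_const (fun j => hX _)]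
  simp only [hlag, sum_sum_mul_natAbs_sub_eq_of_yuleWalker hrec]

lemma eq_div_one_sub_of_eq_sum_add {ι : Type*} [Fintype ι] {x b : ℝ} {a y : ι → ℝ}
    (h : x = ∑ j, a j * y j + b) (h0 : x = 0 → ∀ j, y j = 0)
    (hlt : ∑ j, a j * (y j / x) < 1) :
    x = b / (1 - ∑ j, a j * (y j / x)) := by
  rcases eq_or_ne x 0 with hx | hx
  · have hy := h0 hx
    simp only [hy, zero_div, mul_zero, Finset.sum_const_zero, zero_add, sub_zero, div_one] at h ⊢
    exact h
  · rw [eq_div_iff (by linarith), mul_sub, mul_one, Finset.mul_sum]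
    simp_rw [mul_left_comm x, mul_div_cancel₀ _ hx]
    linarith

theorem ginar_marginal_variance_general {Ω : Type*} [MeasurableSpace Ω]
    (μ : Measure Ω) [IsProbabilityMeasure μ]
    (p : ℕ) (t : ℤ)
    (X : ℤ → Ω → ℕ) (Y : Fin p → ℕ → Ω → ℕ) (ε : Ω → ℕ)
    (α β : Fin p → ℝ) (μX σε2 : ℝ) (γ : ℕ → ℝ)
    (hXmeas : ∀ s, Measurable (X s)) (hYmeas : ∀ j m, Measurable (Y j m))
    (hεmeas : Measurable ε)
    (hX2 : ∀ s, MemLp (fun ω => (X s ω : ℝ)) 2 μ)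
    (hY2 : ∀ j m, MemLp (fun ω => (Y j m ω : ℝ)) 2 μ)
    (hε2 : MemLp (fun ω => (ε ω : ℝ)) 2 μ)
    -- second-order stationarity
    (hXmean : ∀ s, ∫ ω, (X s ω : ℝ) ∂μ = μX)
    (hXcov : ∀ s h : ℤ,
      (∫ ω, (X s ω : ℝ) * (X (s + h) ω : ℝ) ∂μ)
          - (∫ ω, (X s ω : ℝ) ∂μ) * (∫ ω, (X (s + h) ω : ℝ) ∂μ)
        = γ h.natAbs)
    -- structural equation at time `t`
    (hstruct : ∀ ω,
      X t ω = (∑ j : Fin p, ∑ m ∈ Finset.Icc 1 (X (t - ((j : ℕ) + 1)) ω), Y j m ω) + ε ω)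
    (hYiid : ∀ j, iIndepFun (Y j) μ)
    (hYmean : ∀ j m, ∫ ω, (Y j m ω : ℝ) ∂μ = α j)
    (hYvar : ∀ j m, variance (fun ω => (Y j m ω : ℝ)) μ = β j)
    (hεvar : variance (fun ω => (ε ω : ℝ)) μ = σε2)
    (hmut : iIndep (fun i : Option (Fin p) =>
      Option.elim i (MeasurableSpace.comap ε inferInstance)
        (fun j => MeasurableSpace.comap (fun ω m => Y j m ω) MeasurableSpace.pi)) μ)
    (hindep : IndepFun
      (fun ω => ((fun jm : Fin p × ℕ => Y jm.1 jm.2 ω), ε ω))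
      (fun ω => fun j : Fin p => X (t - ((j : ℕ) + 1)) ω) μ)
    -- autocovariance recursion for lags `k = 1, …, p`
    (hrec : ∀ k : ℕ, 1 ≤ k → k ≤ p →
      γ k = ∑ j : Fin p, α j * γ ((k : ℤ) - ((j : ℕ) + 1)).natAbs) :
    γ 0 = (∑ j, α j * γ ((j : ℕ) + 1)) + ((∑ j, β j * μX) + σε2) ∧
      ((∑ j, α j * (γ ((j : ℕ) + 1) / γ 0)) < 1 →
        γ 0 = ((∑ j, β j * μX) + σε2) / (1 - ∑ j, α j * (γ ((j : ℕ) + 1) / γ 0))) := by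
  set U : Ω → (Fin p → ℕ → ℕ) × ℕ := fun ω => (fun j m => Y j m ω, ε ω)
  set V : Ω → Fin p → ℕ := fun ω j => X (t - ((j : ℕ) + 1)) ω
  have hU : Measurable U :=
    (measurable_pi_lambda _ fun j => measurable_pi_lambda _ fun m => hYmeas j m).prodMk hεmeas
  have hV : Measurable V := measurable_pi_lambda _ fun j => hXmeas _
  have hUV : IndepFun U V μ :=
    hindep.comp (φ := fun z => (fun j m => z.1 (j, m), z.2)) (by fun_prop) measurable_id
  have hcov : ∀ s h, cov[fun ω => (X s ω : ℝ), fun ω => (X (s + h) ω : ℝ); μ] = γ h.natAbs :=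
    fun s h => (covariance_eq_sub (hX2 s) (hX2 (s + h))).trans (hXcov s h)
  have hvar : Var[fun ω => (X t ω : ℝ); μ] = γ 0 := by
    simpa [covariance_self (hX2 t).aemeasurable] using hcov t 0
  have hXt : (fun ω => (X t ω : ℝ)) = fun ω => thinningSum (U ω).1 (U ω).2 (V ω) := by
    ext ω
    simp [U, V, hstruct, thinningSum]
  have hlin : ∀ (a : Fin p → ℝ) (c : ℝ), MemLp (fun ω => ∑ j, a j * (V ω j : ℝ) + c) 2 μ :=
    fun a c => (memLp_finsetSum _ fun j _ => (hX2 _).const_mul (a j)).add (memLp_const c)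
  have htotal := hUV.variance_comp_eq_integral_add_variance hU hV measurable_thinningSum
    (hXt ▸ hX2 t) (memLp_thinningSum hY2 hε2)
    (fun n => integral_thinningSum (fun j m => (hY2 j m).integrable one_le_two)
      (hε2.integrable one_le_two) hYmean n)
    (fun n => (variance_thinningSum hY2 hε2 hYiid hmut hYvar n).trans (by rw [hεvar]))
    (hlin α (∫ ω, (ε ω : ℝ) ∂μ)) ((hlin β σε2).integrable one_le_two)
  have hvariance : γ 0 = ∑ j, α j * γ ((j : ℕ) + 1) + (∑ j, β j * μX + σε2) := by
    rw [← hvar, hXt, htotal, integral_fun_sum_mul_add_const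
      (Z := fun j ω => (V ω j : ℝ)) (fun j => (hX2 _).integrable one_le_two),
      variance_sum_lag_mul_add_const_of_yuleWalker hX2 hcov hrec]
    simp only [V, hXmean]
    ring
  refine ⟨hvariance, eq_div_one_sub_of_eq_sum_add hvariance fun h0 j => ?_⟩
  rw [← Int.natAbs_natCast ((j : ℕ) + 1), ← hcov t _]
  exact covariance_eq_zero_of_variance_eq_zero (hX2 t) (hvar.trans h0) _

/-- Paper's Lemma 2, marginal variance of a GINAR(p) process.  For a second-order
stationary process `(X s)_{s ∈ ℤ}` with mean `μ_X` and autocovariance function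
`γ(|h|) = Cov(X s, X (s+h))`, satisfying at time `t` the structural equation
`X t = Σ_{j=1}^{p} Σ_{m=1}^{X (t−j)} Y^{(j)}_m + ε` with the `(Y j m)_m` iid of mean
`α j` and variance `β j`, the families `(Y 1 m)_m, …, (Y p m)_m, ε` mutually
independent and jointly independent of `(X (t−1), …, X (t−p))`, `ε` of variance
`σ²_ε`, and the autocovariance recursion `γ(k) = Σ_j α_j γ(|k−j|)` for `k = 1, …, p`,
the variance satisfies `γ(0) = Σ_j α_j γ(j) + Σ_j β_j μ_X + σ²_ε`; equivalently, if
`Σ_j α_j ρ(j) < 1` with `ρ(j) = γ(j)/γ(0)`, then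
`γ(0) = (Σ_j β_j μ_X + σ²_ε)/(1 − Σ_j α_j ρ(j))`.  (Here `j : Fin p` corresponds to
the lag `j+1`.) -/
theorem ginar_marginal_variance {Ω : Type*} [MeasurableSpace Ω]
    (μ : Measure Ω) [IsProbabilityMeasure μ]
    (p : ℕ) (hp : 1 ≤ p) (t : ℤ)
    (X : ℤ → Ω → ℕ) (Y : Fin p → ℕ → Ω → ℕ) (ε : Ω → ℕ)
    (α β : Fin p → ℝ) (μX σε2 : ℝ) (γ : ℕ → ℝ)
    (hXmeas : ∀ s, Measurable (X s)) (hYmeas : ∀ j m, Measurable (Y j m))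
    (hεmeas : Measurable ε)
    (hX2 : ∀ s, MemLp (fun ω => (X s ω : ℝ)) 2 μ)
    (hY2 : ∀ j m, MemLp (fun ω => (Y j m ω : ℝ)) 2 μ)
    (hε2 : MemLp (fun ω => (ε ω : ℝ)) 2 μ)
    -- second-order stationarity
    (hXmean : ∀ s, ∫ ω, (X s ω : ℝ) ∂μ = μX)
    (hXcov : ∀ s h : ℤ,
      (∫ ω, (X s ω : ℝ) * (X (s + h) ω : ℝ) ∂μ)
          - (∫ ω, (X s ω : ℝ) ∂μ) * (∫ ω, (X (s + h) ω : ℝ) ∂μ)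
        = γ h.natAbs)
    -- structural equation at time `t`
    (hstruct : ∀ ω,
      X t ω = (∑ j : Fin p, ∑ m ∈ Finset.Icc 1 (X (t - ((j : ℕ) + 1)) ω), Y j m ω) + ε ω)
    (hYiid : ∀ j, iIndepFun (Y j) μ)
    (hYident : ∀ j m, IdentDistrib (Y j m) (Y j 0) μ μ)
    (hYmean : ∀ j m, ∫ ω, (Y j m ω : ℝ) ∂μ = α j)
    (hYvar : ∀ j m, variance (fun ω => (Y j m ω : ℝ)) μ = β j)
    (hεvar : variance (fun ω => (ε ω : ℝ)) μ = σε2)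
    (hmut : iIndep (fun i : Option (Fin p) =>
      Option.elim i (MeasurableSpace.comap ε inferInstance)
        (fun j => MeasurableSpace.comap (fun ω m => Y j m ω) MeasurableSpace.pi)) μ)
    (hindep : IndepFun
      (fun ω => ((fun jm : Fin p × ℕ => Y jm.1 jm.2 ω), ε ω))
      (fun ω => fun j : Fin p => X (t - ((j : ℕ) + 1)) ω) μ)
    -- autocovariance recursion for lags `k = 1, …, p`
    (hrec : ∀ k : ℕ, 1 ≤ k → k ≤ p →
      γ k = ∑ j : Fin p, α j * γ ((k : ℤ) - ((j : ℕ) + 1)).natAbs) :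
    γ 0 = (∑ j, α j * γ ((j : ℕ) + 1)) + ((∑ j, β j * μX) + σε2) ∧
      ((∑ j, α j * (γ ((j : ℕ) + 1) / γ 0)) < 1 →
        γ 0 = ((∑ j, β j * μX) + σε2) / (1 - ∑ j, α j * (γ ((j : ℕ) + 1) / γ 0))) :=
  ginar_marginal_variance_general μ p t X Y ε α β μX σε2 γ hXmeas hYmeas hεmeas hX2 hY2 hε2 hXmean
    hXcov hstruct hYiid hYmean hYvar hεvar hmut hindep hrec
end
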